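/- arXiv:1605.01204 — 4 statements merged into one kernel-verified Lean document; each statement's English description precedes it below -/
import Mathlib

section
/- Let r : ℝ → ℝ² be a smooth curve with r(t) ≠ 0, satisfying planar Kepler dynamics r̈ = -(k/|r|³) r, with scalar angular momentum ℓ = r₁ṙ₂ - r₂ṙ₁ ≠ 0. Then the momentum p(t) = ṙ(t) satisfies |p(t) - c|² = k²/ℓ² for all t, where c = (*A)/ℓ is a constant point and A is the planar LRL vector A = |p|² r - (r·p) p - k r/|r|. That is, the hodograph is contained in a circle of radius k/|ℓ| centred at (*A)/ℓ. -/
/-- The plane vector `(a, b)` as an element of `EuclideanSpace ℝ (Fin 2)`. -/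
noncomputable def e2 (a b : ℝ) : EuclideanSpace ℝ (Fin 2) :=
  (WithLp.equiv 2 (Fin 2 → ℝ)).symm ![a, b]

/-- Rotation by +π/2: `*(w₁, w₂) = (-w₂, w₁)`. -/
noncomputable def rot (w : EuclideanSpace ℝ (Fin 2)) : EuclideanSpace ℝ (Fin 2) :=
  e2 (-(w 1)) (w 0)

private lemma norm_sq_two (w : EuclideanSpace ℝ (Fin 2)) : ‖w‖ ^ 2 = w 0 ^ 2 + w 1 ^ 2 := by
  rw [EuclideanSpace.norm_eq, Real.sq_sqrt (by positivity)]
  simp [Fin.sum_univ_two, sq]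

private lemma comp_hasDerivAt (f : ℝ → EuclideanSpace ℝ (Fin 2)) (v : EuclideanSpace ℝ (Fin 2))
    (t : ℝ) (i : Fin 2) (h : HasDerivAt f v t) : HasDerivAt (fun s => f s i) (v i) t := by
  have h' := (EuclideanSpace.proj i).hasFDerivAt.comp_hasDerivAt t h
  exact h'

/-- The hodograph of a planar Kepler motion is contained in a circle of radius
`k/|ℓ|` centred at the constant point `(*A)/ℓ`, where `A` is the planar LRL vector
`A = ‖p‖² r - (r·p) p - k r/‖r‖` and `ℓ = r₁p₂ - r₂p₁`. -/
theorem hodograph_circle (k : ℝ) (r : ℝ → EuclideanSpace ℝ (Fin 2))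
    (hsmooth : ContDiff ℝ (⊤ : ℕ∞) r) (hne : ∀ t, r t ≠ 0)
    (hnewton : ∀ t, deriv (deriv r) t = -(k / ‖r t‖ ^ 3) • r t)
    (p : ℝ → EuclideanSpace ℝ (Fin 2)) (hp : p = deriv r)
    (ℓ : ℝ → ℝ) (hℓdef : ℓ = fun t => r t 0 * p t 1 - r t 1 * p t 0)
    (hℓ : ℓ 0 ≠ 0)
    (A : ℝ → EuclideanSpace ℝ (Fin 2))
    (hA : A = fun t =>
      ‖p t‖ ^ 2 • r t - (inner ℝ (r t) (p t) : ℝ) • p t - (k / ‖r t‖) • r t)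
    (c : EuclideanSpace ℝ (Fin 2)) (hc : c = (ℓ 0)⁻¹ • rot (A 0)) :
    ∀ t, ‖p t - c‖ ^ 2 = k ^ 2 / (ℓ 0) ^ 2 := by
  subst hp
  have hd : Differentiable ℝ r := hsmooth.differentiable (by simp)
  have hd2 : Differentiable ℝ (deriv r) :=
    ((contDiff_infty_iff_deriv.mp (hsmooth.of_le (by simp))).2).differentiable (by simp)
  have hr : ∀ t, HasDerivAt r (deriv r t) t := fun t => (hd t).hasDerivAt
  have hpd : ∀ t, HasDerivAt (deriv r) (-(k / ‖r t‖ ^ 3) • r t) t := fun t =>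
    hnewton t ▸ (hd2 t).hasDerivAt
  have hx : ∀ t, HasDerivAt (fun s => r s 0) (deriv r t 0) t := fun t =>
    comp_hasDerivAt r _ t 0 (hr t)
  have hy : ∀ t, HasDerivAt (fun s => r s 1) (deriv r t 1) t := fun t =>
    comp_hasDerivAt r _ t 1 (hr t)
  have hpx : ∀ t, HasDerivAt (fun s => deriv r s 0) (-(k / ‖r t‖ ^ 3) * r t 0) t := fun t => by
    simpa using comp_hasDerivAt (deriv r) _ t 0 (hpd t)
  have hpy : ∀ t, HasDerivAt (fun s => deriv r s 1) (-(k / ‖r t‖ ^ 3) * r t 1) t := fun t => by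
    simpa using comp_hasDerivAt (deriv r) _ t 1 (hpd t)
  have hnorm : ∀ t, ‖r t‖ = Real.sqrt (r t 0 ^ 2 + r t 1 ^ 2) := fun t => by
    rw [EuclideanSpace.norm_eq]
    simp [Fin.sum_univ_two, Real.norm_eq_abs, sq_abs]
  have hpos : ∀ t, 0 < ‖r t‖ := fun t => norm_pos_iff.mpr (hne t)
  have hSpos : ∀ t, 0 < r t 0 ^ 2 + r t 1 ^ 2 := fun t =>
    Real.sqrt_pos.mp (hnorm t ▸ hpos t)
  have hNpos : ∀ t, 0 < Real.sqrt (r t 0 ^ 2 + r t 1 ^ 2) := fun t => hnorm t ▸ hpos t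
  have hNsq : ∀ t, Real.sqrt (r t 0 ^ 2 + r t 1 ^ 2) ^ 2 = r t 0 ^ 2 + r t 1 ^ 2 := fun t =>
    Real.sq_sqrt (hSpos t).le
  have hNder : ∀ t, HasDerivAt (fun s => Real.sqrt (r s 0 ^ 2 + r s 1 ^ 2))
      ((r t 0 * deriv r t 0 + r t 1 * deriv r t 1) / Real.sqrt (r t 0 ^ 2 + r t 1 ^ 2)) t := by
    intro t
    have h := (((hx t).pow 2).add ((hy t).pow 2)).sqrt (ne_of_gt (hSpos t))
    convert h using 1
    have hN0 := (hNpos t).ne'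
    simp only [Pi.add_apply, Pi.pow_apply]
    norm_num
    field_simp
  -- conservation of ℓ
  have hL : ∀ t, HasDerivAt ℓ 0 t := fun t => by
    rw [hℓdef]
    have h := ((hx t).mul (hpy t)).sub ((hy t).mul (hpx t))
    convert h using 1
    · rfl
    · rfl
    · rfl
    ring
  have hLconst : ∀ t, ℓ t = ℓ 0 := fun t =>
    is_const_of_deriv_eq_zero (fun s => (hL s).differentiableAt) (fun s => (hL s).deriv) t 0
  have hlt : ∀ t, ℓ 0 = r t 0 * deriv r t 1 - r t 1 * deriv r t 0 := fun t => by
    rw [← hLconst t, hℓdef]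
  -- the two components of the rotated LRL vector, as scalar functions
  have hH0 : ∀ t, HasDerivAt
      (fun s => ℓ 0 * deriv r s 1 - k * (r s 0 / Real.sqrt (r s 0 ^ 2 + r s 1 ^ 2))) 0 t := by
    intro t
    have h := ((hpy t).const_mul (ℓ 0)).sub
      (((hx t).div (hNder t) (ne_of_gt (hNpos t))).const_mul k)
    convert h using 1
    · rfl
    · rfl
    · rfl
    have hN0 := (hNpos t).ne'
    rw [hnorm t, hlt t]
    field_simp [(hSpos t).ne']
    linear_combination (k * deriv r t 0) * hNsq t
  have hH1 : ∀ t, HasDerivAt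
      (fun s => -(ℓ 0) * deriv r s 0 - k * (r s 1 / Real.sqrt (r s 0 ^ 2 + r s 1 ^ 2))) 0 t := by
    intro t
    have h := ((hpx t).const_mul (-(ℓ 0))).sub
      (((hy t).div (hNder t) (ne_of_gt (hNpos t))).const_mul k)
    convert h using 1
    · rfl
    · rfl
    · rfl
    have hN0 := (hNpos t).ne'
    rw [hnorm t, hlt t]
    field_simp [(hSpos t).ne']
    linear_combination (k * deriv r t 1) * hNsq t
  have hH0const : ∀ t,
      ℓ 0 * deriv r t 1 - k * (r t 0 / Real.sqrt (r t 0 ^ 2 + r t 1 ^ 2))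
      = ℓ 0 * deriv r 0 1 - k * (r 0 0 / Real.sqrt (r 0 0 ^ 2 + r 0 1 ^ 2)) := fun t =>
    is_const_of_deriv_eq_zero (fun s => (hH0 s).differentiableAt) (fun s => (hH0 s).deriv) t 0
  have hH1const : ∀ t,
      -(ℓ 0) * deriv r t 0 - k * (r t 1 / Real.sqrt (r t 0 ^ 2 + r t 1 ^ 2))
      = -(ℓ 0) * deriv r 0 0 - k * (r 0 1 / Real.sqrt (r 0 0 ^ 2 + r 0 1 ^ 2)) := fun t =>
    is_const_of_deriv_eq_zero (fun s => (hH1 s).differentiableAt) (fun s => (hH1 s).deriv) t 0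
  -- components of A at time 0
  have hinner : ∀ t, (inner ℝ (r t) (deriv r t) : ℝ)
      = r t 0 * deriv r t 0 + r t 1 * deriv r t 1 := fun t => by
    simp [PiLp.inner_apply, RCLike.inner_apply, Fin.sum_univ_two]
    ring
  have hA0 : A 0 0 = ℓ 0 * deriv r 0 1 - k * (r 0 0 / Real.sqrt (r 0 0 ^ 2 + r 0 1 ^ 2)) := by
    rw [hA]
    show ‖deriv r 0‖ ^ 2 * r 0 0 - (inner ℝ (r 0) (deriv r 0) : ℝ) * deriv r 0 0
        - k / ‖r 0‖ * r 0 0 = _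
    rw [norm_sq_two, hinner, hnorm, hlt 0]
    have hN0 := (hNpos 0).ne'
    field_simp [(hSpos 0).ne']
    all_goals first | ring | exact Or.inl trivial
  have hA1 : A 0 1 = -(ℓ 0) * deriv r 0 0 - k * (r 0 1 / Real.sqrt (r 0 0 ^ 2 + r 0 1 ^ 2)) := by
    rw [hA]
    show ‖deriv r 0‖ ^ 2 * r 0 1 - (inner ℝ (r 0) (deriv r 0) : ℝ) * deriv r 0 1
        - k / ‖r 0‖ * r 0 1 = _
    rw [norm_sq_two, hinner, hnorm, hlt 0]
    have hN0 := (hNpos 0).ne'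
    field_simp [(hSpos 0).ne']
    all_goals first | ring | exact Or.inl trivial
  -- components of c
  have hc0 : c 0 = (ℓ 0)⁻¹ * (-(A 0 1)) := by rw [hc]; simp [rot, e2]
  have hc1 : c 1 = (ℓ 0)⁻¹ * (A 0 0) := by rw [hc]; simp [rot, e2]
  intro t
  rw [norm_sq_two]
  have h0 : (deriv r t - c) 0 = deriv r t 0 - c 0 := rfl
  have h1 : (deriv r t - c) 1 = deriv r t 1 - c 1 := rfl
  rw [h0, h1, hc0, hc1, hA0, hA1, ← hH0const t, ← hH1const t]
  have hN0 := (hNpos t).ne'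
  field_simp
  linear_combination (-(k ^ 2)) * hNsq t
end

section
/- In the planar Kepler problem with ℓ ≠ 0 and energy E < 0, for every point r on the orbit, |r| + |I - r| = k/(-E), where I = A/E and A is the LRL vector. Hence the orbit lies on an ellipse with foci 0 and I and major axis k/(-E). -/
/-!
With `X = ‖r‖`, `P = ‖p‖²` and `s = ⟪r, p⟫`, the Lagrange quantity `X²P - s²` (which is `ℓ²` in
the plane) turns the identities `⟪A, r⟫ = ℓ² - kX` and `‖A‖² = k² + 2Eℓ²` into
`‖A/E - r‖² = (k/E + X)²`, all `ℓ²` terms cancelling. Since `k + EX = PX/2 ≥ 0` and `E < 0`,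
`k/E + X ≤ 0`, so `‖I - r‖ = k/(-E) - ‖r‖`.
-/

open RealInnerProductSpace

namespace Kepler

variable {V : Type*} [NormedAddCommGroup V] [InnerProductSpace ℝ V] (k : ℝ) (r p : V)

noncomputable section

def energy : ℝ := ‖p‖ ^ 2 / 2 - k / ‖r‖

def lrlVector : V := ‖p‖ ^ 2 • r - ⟪r, p⟫ • p - (k / ‖r‖) • r

theorem inner_lrlVector_self :
    ⟪lrlVector k r p, r⟫ = ‖r‖ ^ 2 * ‖p‖ ^ 2 - ⟪r, p⟫ ^ 2 - k * ‖r‖ := by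
  rcases eq_or_ne r 0 with rfl | hr
  · simp [lrlVector]
  have hX : ‖r‖ ≠ 0 := norm_ne_zero_iff.mpr hr
  simp only [lrlVector, inner_sub_left, real_inner_smul_left, real_inner_self_eq_norm_sq,
    real_inner_comm r p]
  field_simp

variable {r} (hr : r ≠ 0)
include hr

theorem norm_lrlVector_sq :
    ‖lrlVector k r p‖ ^ 2 = k ^ 2 + 2 * energy k r p * (‖r‖ ^ 2 * ‖p‖ ^ 2 - ⟪r, p⟫ ^ 2) := by
  have hX : ‖r‖ ≠ 0 := norm_ne_zero_iff.mpr hr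
  rw [← real_inner_self_eq_norm_sq]
  simp only [lrlVector, energy, inner_sub_left, inner_sub_right, real_inner_smul_left,
    real_inner_smul_right]
  simp only [real_inner_self_eq_norm_sq, real_inner_comm r p]
  field_simp
  ring

omit [InnerProductSpace ℝ V] in
theorem coupling_add_energy_mul_norm : k + energy k r p * ‖r‖ = ‖p‖ ^ 2 / 2 * ‖r‖ := by
  have hX : ‖r‖ ≠ 0 := norm_ne_zero_iff.mpr hr
  simp only [energy]
  field_simp
  ring

theorem norm_inv_energy_smul_lrlVector_sub_sq (hE : energy k r p ≠ 0) :
    ‖(energy k r p)⁻¹ • lrlVector k r p - r‖ ^ 2 = (k / energy k r p + ‖r‖) ^ 2 := by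
  rw [norm_sub_sq_real, norm_smul, mul_pow, norm_lrlVector_sq k p hr, real_inner_smul_left,
    inner_lrlVector_self, Real.norm_eq_abs, sq_abs]
  field_simp
  ring

theorem norm_inv_energy_smul_lrlVector_sub (hE : energy k r p < 0) :
    ‖(energy k r p)⁻¹ • lrlVector k r p - r‖ = k / -energy k r p - ‖r‖ := by
  have hsign : k / energy k r p + ‖r‖ ≤ 0 := by
    have hkE : 0 ≤ k + energy k r p * ‖r‖ := by
      rw [coupling_add_energy_mul_norm k p hr]
      positivity
    rw [div_add' _ _ _ hE.ne, mul_comm]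
    exact div_nonpos_of_nonneg_of_nonpos hkE hE.le
  rw [show k / -energy k r p - ‖r‖ = -(k / energy k r p + ‖r‖) by ring,
    ← sq_eq_sq₀ (norm_nonneg _) (neg_nonneg.mpr hsign), neg_sq]
  exact norm_inv_energy_smul_lrlVector_sub_sq k p hr hE.ne

end

end Kepler

theorem elliptic_orbit_general (k : ℝ) (r p : EuclideanSpace ℝ (Fin 2)) (hr : r ≠ 0)
    (E : ℝ) (hE : E = ‖p‖ ^ 2 / 2 - k / ‖r‖) (hEneg : E < 0)
    (A : EuclideanSpace ℝ (Fin 2))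
    (hA : A = ‖p‖ ^ 2 • r - (inner ℝ r p : ℝ) • p - (k / ‖r‖) • r)
    (I : EuclideanSpace ℝ (Fin 2)) (hI : I = E⁻¹ • A) :
    ‖r‖ + ‖I - r‖ = k / (-E) := by
  obtain rfl : E = Kepler.energy k r p := hE
  obtain rfl : A = Kepler.lrlVector k r p := hA
  rw [hI, Kepler.norm_inv_energy_smul_lrlVector_sub k p hr hEneg]
  ring

/-- Kepler first law for elliptic orbits: if `E < 0` and `ℓ ≠ 0`, every point `r`
of the orbit satisfies `‖r‖ + ‖I - r‖ = k/(-E)` where `I = A/E`; thus the orbit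
lies on an ellipse with foci `0` and `I` and major axis `k/(-E)`. -/
theorem elliptic_orbit (k : ℝ) (r p : EuclideanSpace ℝ (Fin 2)) (hr : r ≠ 0)
    (ℓ : ℝ) (hℓdef : ℓ = r 0 * p 1 - r 1 * p 0) (hℓ : ℓ ≠ 0)
    (E : ℝ) (hE : E = ‖p‖ ^ 2 / 2 - k / ‖r‖) (hEneg : E < 0)
    (A : EuclideanSpace ℝ (Fin 2))
    (hA : A = ‖p‖ ^ 2 • r - (inner ℝ r p : ℝ) • p - (k / ‖r‖) • r)
    (I : EuclideanSpace ℝ (Fin 2)) (hI : I = E⁻¹ • A) :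
    ‖r‖ + ‖I - r‖ = k / (-E) :=
  elliptic_orbit_general k r p hr E hE hEneg A hA I hI
end

section
/- In the planar Kepler problem with ℓ ≠ 0 and energy E > 0, for every point r on the orbit, |I - r| - |r| = k/E, where I = A/E and A is the LRL vector. Hence the orbit lies on one branch of a hyperbola with foci 0 and I and major axis k/E. -/
/-! Subtracting `E • r` from the Laplace–Runge–Lenz vector leaves `(‖p‖²/2) • r - ⟪r, p⟫ • p`,
whose norm is exactly `(‖p‖²/2) ‖r‖ = (E + k/‖r‖) ‖r‖`. Dividing by `E` gives
`‖I - r‖ = ‖r‖ + k/E`. -/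

open RealInnerProductSpace

theorem norm_half_norm_sq_smul_sub_inner_smul {V : Type*} [NormedAddCommGroup V]
    [InnerProductSpace ℝ V] (r p : V) :
    ‖(‖p‖ ^ 2 / 2) • r - ⟪r, p⟫ • p‖ = ‖p‖ ^ 2 / 2 * ‖r‖ := by
  have hsq : ‖(‖p‖ ^ 2 / 2) • r - ⟪r, p⟫ • p‖ ^ 2 = (‖p‖ ^ 2 / 2 * ‖r‖) ^ 2 := by
    rw [← real_inner_self_eq_norm_sq]
    simp only [inner_sub_left, inner_sub_right, real_inner_smul_left, real_inner_smul_right]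
    rw [real_inner_self_eq_norm_sq, real_inner_self_eq_norm_sq, real_inner_comm r p]
    ring
  exact (pow_left_inj₀ (norm_nonneg _) (by positivity) two_ne_zero).mp hsq

theorem hyperbolic_orbit_general (k : ℝ) (r p : EuclideanSpace ℝ (Fin 2)) (hr : r ≠ 0)
    (E : ℝ) (hE : E = ‖p‖ ^ 2 / 2 - k / ‖r‖) (hEpos : 0 < E)
    (A : EuclideanSpace ℝ (Fin 2))
    (hA : A = ‖p‖ ^ 2 • r - (inner ℝ r p : ℝ) • p - (k / ‖r‖) • r)
    (I : EuclideanSpace ℝ (Fin 2)) (hI : I = E⁻¹ • A) :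
    ‖I - r‖ - ‖r‖ = k / E := by
  have hA_sub : A - E • r = (‖p‖ ^ 2 / 2) • r - ⟪r, p⟫ • p := by
    rw [hA, hE]
    module
  have hk : ‖p‖ ^ 2 / 2 * ‖r‖ = E * ‖r‖ + k := by
    rw [hE]
    field_simp [norm_ne_zero_iff.mpr hr]
    ring
  have hI_sub : I - r = E⁻¹ • (A - E • r) := by
    rw [hI, smul_sub, inv_smul_smul₀ hEpos.ne']
  rw [hI_sub, hA_sub, norm_smul, norm_half_norm_sq_smul_sub_inner_smul, hk,
    Real.norm_of_nonneg (inv_nonneg.mpr hEpos.le)]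
  field_simp
  ring

/-- Kepler first law for hyperbolic orbits: if `E > 0` and `ℓ ≠ 0`, every point `r`
of the orbit satisfies `‖I - r‖ - ‖r‖ = k/E` where `I = A/E`; thus the orbit lies
on one branch of a hyperbola with foci `0` and `I` and major axis `k/E`. -/
theorem hyperbolic_orbit (k : ℝ) (r p : EuclideanSpace ℝ (Fin 2)) (hr : r ≠ 0)
    (ℓ : ℝ) (hℓdef : ℓ = r 0 * p 1 - r 1 * p 0) (hℓ : ℓ ≠ 0)
    (E : ℝ) (hE : E = ‖p‖ ^ 2 / 2 - k / ‖r‖) (hEpos : 0 < E)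
    (A : EuclideanSpace ℝ (Fin 2))
    (hA : A = ‖p‖ ^ 2 • r - (inner ℝ r p : ℝ) • p - (k / ‖r‖) • r)
    (I : EuclideanSpace ℝ (Fin 2)) (hI : I = E⁻¹ • A) :
    ‖I - r‖ - ‖r‖ = k / E :=
  hyperbolic_orbit_general k r p hr E hE hEpos A hA I hI
end

section
/- In the planar Kepler problem with ℓ ≠ 0 and E ≠ 0, with I' = (k/(-E))·(r/|r|) and I = A/E, the vector from I to I' equals (ℓ/E)·(*p), and hence the distance |I' - I| = (|ℓ|/|E|)·|p| is proportional to the speed. -/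
/-!
The potential terms cancel: `E • I' = -(k/‖r‖) • r` is exactly the potential part of `A`, so
`I' - I = E⁻¹ • (⟪r, p⟫ • p - ‖p‖² • r)`. In the plane this is the Lagrange-type identity
`⟪r, p⟫ • p - ‖p‖² • r = (r × p) • (*p)`, with `r × p = ℓ`, and `*` is an isometry.
-/

open RealInnerProductSpace

@[simp]
lemma rot_apply_zero (w : EuclideanSpace ℝ (Fin 2)) : rot w 0 = -w 1 := rfl

@[simp]
lemma rot_apply_one (w : EuclideanSpace ℝ (Fin 2)) : rot w 1 = w 0 := rfl

namespace EuclideanSpace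

lemma norm_sq_fin_two (w : EuclideanSpace ℝ (Fin 2)) : ‖w‖ ^ 2 = w 0 ^ 2 + w 1 ^ 2 := by
  simp only [EuclideanSpace.norm_sq_eq, Fin.sum_univ_two, Real.norm_eq_abs, sq_abs]

lemma inner_fin_two (v w : EuclideanSpace ℝ (Fin 2)) : ⟪v, w⟫ = v 0 * w 0 + v 1 * w 1 := by
  simp only [EuclideanSpace.inner_eq_star_dotProduct, dotProduct, Fin.sum_univ_two,
    star_trivial]
  ring

end EuclideanSpace

open EuclideanSpace

lemma norm_rot (w : EuclideanSpace ℝ (Fin 2)) : ‖rot w‖ = ‖w‖ := by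
  have h : ‖rot w‖ ^ 2 = ‖w‖ ^ 2 := by
    rw [norm_sq_fin_two, norm_sq_fin_two, rot_apply_zero, rot_apply_one]
    ring
  exact (sq_eq_sq₀ (norm_nonneg _) (norm_nonneg _)).mp h

lemma inner_smul_sub_norm_sq_smul_eq_smul_rot (r p : EuclideanSpace ℝ (Fin 2)) :
    ⟪r, p⟫ • p - ‖p‖ ^ 2 • r = (r 0 * p 1 - r 1 * p 0) • rot p := by
  ext i
  fin_cases i <;>
  · simp only [Fin.zero_eta, Fin.mk_one, PiLp.sub_apply, PiLp.smul_apply, smul_eq_mul,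
      inner_fin_two, norm_sq_fin_two, rot_apply_zero, rot_apply_one]
    ring

theorem II'_prop_speed_general (k : ℝ) (r p : EuclideanSpace ℝ (Fin 2))
    (ℓ : ℝ) (hℓdef : ℓ = r 0 * p 1 - r 1 * p 0)
    (E : ℝ)
    (A : EuclideanSpace ℝ (Fin 2))
    (hA : A = ‖p‖ ^ 2 • r - (inner ℝ r p : ℝ) • p - (k / ‖r‖) • r)
    (I : EuclideanSpace ℝ (Fin 2)) (hI : I = E⁻¹ • A)
    (I' : EuclideanSpace ℝ (Fin 2)) (hI' : I' = (k / (-E) / ‖r‖) • r) :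
    I' - I = (ℓ / E) • rot p ∧ ‖I' - I‖ = (|ℓ| / |E|) * ‖p‖ := by
  have hdiff : I' - I = E⁻¹ • (⟪r, p⟫ • p - ‖p‖ ^ 2 • r) := by
    rw [hI', hI, hA, show k / (-E) / ‖r‖ = E⁻¹ * -(k / ‖r‖) by ring, mul_smul, ← smul_sub]
    module
  have hrot : I' - I = (ℓ / E) • rot p := by
    rw [hdiff, inner_smul_sub_norm_sq_smul_eq_smul_rot, ← hℓdef, smul_smul, div_eq_inv_mul]
  refine ⟨hrot, ?_⟩
  rw [hrot, norm_smul, norm_rot, Real.norm_eq_abs, abs_div]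

/-- With `I' = (k/(-E)) r/‖r‖` and `I = A/E`, the vector `I' - I` equals
`(ℓ/E) • (*p)`, so the distance `‖I' - I‖ = (|ℓ|/|E|)‖p‖` is proportional to
the speed. -/
theorem II'_prop_speed (k : ℝ) (r p : EuclideanSpace ℝ (Fin 2)) (hr : r ≠ 0)
    (ℓ : ℝ) (hℓdef : ℓ = r 0 * p 1 - r 1 * p 0) (hℓ : ℓ ≠ 0)
    (E : ℝ) (hE : E = ‖p‖ ^ 2 / 2 - k / ‖r‖) (hEne : E ≠ 0)
    (A : EuclideanSpace ℝ (Fin 2))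
    (hA : A = ‖p‖ ^ 2 • r - (inner ℝ r p : ℝ) • p - (k / ‖r‖) • r)
    (I : EuclideanSpace ℝ (Fin 2)) (hI : I = E⁻¹ • A)
    (I' : EuclideanSpace ℝ (Fin 2)) (hI' : I' = (k / (-E) / ‖r‖) • r) :
    I' - I = (ℓ / E) • rot p ∧ ‖I' - I‖ = (|ℓ| / |E|) * ‖p‖ :=
  II'_prop_speed_general k r p ℓ hℓdef E A hA I hI I' hI'
end
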